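/- Let (x, y) be a random pair where y ∈ {0,1}, and let (x₁, y₁), (x₂, y₂) be i.i.d. copies of (x, y). Let λ ∈ [0,1] be a random variable independent of the pairs, and define the mixup variables x̃ = λx₁ + (1−λ)x₂ and ỹ = λy₁ + (1−λ)y₂. Then Cov(x̃, ỹ) = (E[λ²] + E[(1−λ)²])·Cov(x, y) and Cov(x̃) = (E[λ²] + E[(1−λ)²])·Cov(x). In particular, Cov(x̃)⁻¹Cov(x̃,ỹ) = Cov(x)⁻¹Cov(x,y) whenever Cov(x) is invertible. -/

import Mathlib

open Matrix MeasureTheory ProbabilityTheory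

lemma l2_mul_int {Ω : Type*} [MeasureSpace Ω] {f g : Ω → ℝ}
    (hf : MemLp f 2 ℙ) (hg : MemLp g 2 ℙ) : Integrable (fun ω => f ω * g ω) ℙ := by
  have h : MemLp (f • g) 1 ℙ := hg.smul hf
  rw [memLp_one_iff_integrable] at h
  exact h

lemma bdd_int {Ω : Type*} [MeasureSpace Ω] [IsProbabilityMeasure (ℙ : Measure Ω)]
    {f : Ω → ℝ} (hf : Measurable f) (hb : ∀ ω, |f ω| ≤ 1) : Integrable f ℙ :=
  (memLp_top_of_bound hf.aestronglyMeasurable 1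
    (ae_of_all _ fun ω => by simpa using hb ω)).integrable le_top

lemma mix_cov {Ω : Type*} [MeasureSpace Ω] [IsProbabilityMeasure (ℙ : Measure Ω)]
    (u1 v1 u2 v2 lam : Ω → ℝ)
    (hu1 : Measurable u1) (hv1 : Measurable v1) (hu2 : Measurable u2) (hv2 : Measurable v2)
    (hlam : Measurable lam) (hrange : ∀ ω, lam ω ∈ Set.Icc (0:ℝ) 1)
    (hu : MemLp u1 2 ℙ) (hv : MemLp v1 2 ℙ)
    (hiid : IdentDistrib (fun ω => (u1 ω, v1 ω)) (fun ω => (u2 ω, v2 ω)) ℙ ℙ)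
    (hpi : IndepFun (fun ω => (u1 ω, v1 ω)) (fun ω => (u2 ω, v2 ω)) ℙ)
    (hli : IndepFun lam (fun ω => (u1 ω, v1 ω, u2 ω, v2 ω)) ℙ) :
    (∫ ω, (lam ω * u1 ω + (1 - lam ω) * u2 ω) * (lam ω * v1 ω + (1 - lam ω) * v2 ω))
      - (∫ ω, lam ω * u1 ω + (1 - lam ω) * u2 ω) * (∫ ω, lam ω * v1 ω + (1 - lam ω) * v2 ω)
    = ((∫ ω, (lam ω)^2) + ∫ ω, (1 - lam ω)^2) *
        ((∫ ω, u1 ω * v1 ω) - (∫ ω, u1 ω) * ∫ ω, v1 ω) := by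
  have hb0 : ∀ ω, 0 ≤ lam ω := fun ω => (hrange ω).1
  have hb1 : ∀ ω, lam ω ≤ 1 := fun ω => (hrange ω).2
  have habs : ∀ ω, |lam ω| ≤ 1 := fun ω => abs_le.2 ⟨by linarith [hb0 ω], hb1 ω⟩
  have habs' : ∀ ω, |1 - lam ω| ≤ 1 := fun ω => abs_le.2 ⟨by linarith [hb1 ω], by linarith [hb0 ω]⟩
  have hsq : ∀ ω, |(lam ω)^2| ≤ 1 := fun ω => by
    rw [abs_of_nonneg (sq_nonneg _)]; nlinarith [hb0 ω, hb1 ω]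
  have hsq' : ∀ ω, |(1 - lam ω)^2| ≤ 1 := fun ω => by
    rw [abs_of_nonneg (sq_nonneg _)]; nlinarith [hb0 ω, hb1 ω]
  have hmm : ∀ ω, |lam ω * (1 - lam ω)| ≤ 1 := fun ω => by
    rw [abs_mul]
    calc |lam ω| * |1 - lam ω| ≤ 1 * 1 :=
          mul_le_mul (habs ω) (habs' ω) (abs_nonneg _) zero_le_one
      _ = 1 := mul_one 1
  have m1 : Measurable fun ω => (lam ω)^2 := hlam.pow_const 2
  have m2 : Measurable fun ω => (1 - lam ω)^2 := (measurable_const.sub hlam).pow_const 2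
  have m3 : Measurable fun ω => lam ω * (1 - lam ω) := hlam.mul (measurable_const.sub hlam)
  have hidu : IdentDistrib u1 u2 ℙ ℙ := hiid.comp measurable_fst
  have hidv : IdentDistrib v1 v2 ℙ ℙ := hiid.comp measurable_snd
  have hiduv : IdentDistrib (fun ω => u1 ω * v1 ω) (fun ω => u2 ω * v2 ω) ℙ ℙ :=
    hiid.comp (measurable_fst.mul measurable_snd)
  have hu2L : MemLp u2 2 ℙ := hidu.memLp_snd hu
  have hv2L : MemLp v2 2 ℙ := hidv.memLp_snd hv
  have i11 : Integrable (fun ω => u1 ω * v1 ω) ℙ := l2_mul_int hu hv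
  have i12 : Integrable (fun ω => u1 ω * v2 ω) ℙ := l2_mul_int hu hv2L
  have i21 : Integrable (fun ω => u2 ω * v1 ω) ℙ := l2_mul_int hu2L hv
  have i22 : Integrable (fun ω => u2 ω * v2 ω) ℙ := l2_mul_int hu2L hv2L
  have iu1 : Integrable u1 ℙ := hu.integrable one_le_two
  have iv1 : Integrable v1 ℙ := hv.integrable one_le_two
  have iu2 : Integrable u2 ℙ := hu2L.integrable one_le_two
  have iv2 : Integrable v2 ℙ := hv2L.integrable one_le_two
  -- lam-related integrability
  have il : Integrable lam ℙ := bdd_int hlam habs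
  have il2 : Integrable (fun ω => (lam ω)^2) ℙ := bdd_int m1 hsq
  have il2' : Integrable (fun ω => (1 - lam ω)^2) ℙ := bdd_int m2 hsq'
  have ilm : Integrable (fun ω => lam ω * (1 - lam ω)) ℙ := bdd_int m3 hmm
  -- product splits via independence of lam and the quadruple
  have e1 : ∫ ω, (lam ω)^2 * (u1 ω * v1 ω)
      = (∫ ω, (lam ω)^2) * ∫ ω, u1 ω * v1 ω :=
    (hli.comp (measurable_id.pow_const 2)
        (ψ := fun q : ℝ × ℝ × ℝ × ℝ => q.1 * q.2.1) (by fun_prop)).integral_fun_mul_eq_mul_integral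
      m1.aestronglyMeasurable ((hu1.mul hv1).aestronglyMeasurable)
  have e2 : ∫ ω, (lam ω * (1 - lam ω)) * (u1 ω * v2 ω)
      = (∫ ω, lam ω * (1 - lam ω)) * ∫ ω, u1 ω * v2 ω :=
    (hli.comp (measurable_id.mul (measurable_const.sub measurable_id))
        (ψ := fun q : ℝ × ℝ × ℝ × ℝ => q.1 * q.2.2.2) (by fun_prop)).integral_fun_mul_eq_mul_integral
      m3.aestronglyMeasurable ((hu1.mul hv2).aestronglyMeasurable)
  have e3 : ∫ ω, (lam ω * (1 - lam ω)) * (u2 ω * v1 ω)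
      = (∫ ω, lam ω * (1 - lam ω)) * ∫ ω, u2 ω * v1 ω :=
    (hli.comp (measurable_id.mul (measurable_const.sub measurable_id))
        (ψ := fun q : ℝ × ℝ × ℝ × ℝ => q.2.2.1 * q.2.1) (by fun_prop)).integral_fun_mul_eq_mul_integral
      m3.aestronglyMeasurable ((hu2.mul hv1).aestronglyMeasurable)
  have e4 : ∫ ω, ((1 - lam ω)^2) * (u2 ω * v2 ω)
      = (∫ ω, (1 - lam ω)^2) * ∫ ω, u2 ω * v2 ω :=
    (hli.comp ((measurable_const.sub measurable_id).pow_const 2)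
        (ψ := fun q : ℝ × ℝ × ℝ × ℝ => q.2.2.1 * q.2.2.2) (by fun_prop)).integral_fun_mul_eq_mul_integral
      m2.aestronglyMeasurable ((hu2.mul hv2).aestronglyMeasurable)
  -- mean splits
  have f1 : ∫ ω, lam ω * u1 ω = (∫ ω, lam ω) * ∫ ω, u1 ω :=
    (hli.comp measurable_id (ψ := fun q : ℝ × ℝ × ℝ × ℝ => q.1) measurable_fst).integral_fun_mul_eq_mul_integral
      hlam.aestronglyMeasurable hu1.aestronglyMeasurable
  have f2 : ∫ ω, (1 - lam ω) * u2 ω = (∫ ω, (1 - lam ω)) * ∫ ω, u2 ω :=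
    (hli.comp (measurable_const.sub measurable_id)
        (ψ := fun q : ℝ × ℝ × ℝ × ℝ => q.2.2.1) (by fun_prop)).integral_fun_mul_eq_mul_integral
      (measurable_const.sub hlam).aestronglyMeasurable hu2.aestronglyMeasurable
  have g1 : ∫ ω, lam ω * v1 ω = (∫ ω, lam ω) * ∫ ω, v1 ω :=
    (hli.comp measurable_id (ψ := fun q : ℝ × ℝ × ℝ × ℝ => q.2.1) (by fun_prop)).integral_fun_mul_eq_mul_integral
      hlam.aestronglyMeasurable hv1.aestronglyMeasurable
  have g2 : ∫ ω, (1 - lam ω) * v2 ω = (∫ ω, (1 - lam ω)) * ∫ ω, v2 ω :=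
    (hli.comp (measurable_const.sub measurable_id)
        (ψ := fun q : ℝ × ℝ × ℝ × ℝ => q.2.2.2) (by fun_prop)).integral_fun_mul_eq_mul_integral
      (measurable_const.sub hlam).aestronglyMeasurable hv2.aestronglyMeasurable
  -- identical distribution transfers
  have du : ∫ ω, u2 ω = ∫ ω, u1 ω := hidu.integral_eq.symm
  have dv : ∫ ω, v2 ω = ∫ ω, v1 ω := hidv.integral_eq.symm
  have duv : ∫ ω, u2 ω * v2 ω = ∫ ω, u1 ω * v1 ω := hiduv.integral_eq.symm
  -- cross pairs are independent
  have c12 : ∫ ω, u1 ω * v2 ω = (∫ ω, u1 ω) * ∫ ω, v2 ω :=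
    (hpi.comp measurable_fst measurable_snd).integral_fun_mul_eq_mul_integral
      hu1.aestronglyMeasurable hv2.aestronglyMeasurable
  have c21 : ∫ ω, u2 ω * v1 ω = (∫ ω, u2 ω) * ∫ ω, v1 ω :=
    ((hpi.comp measurable_snd measurable_fst).symm).integral_fun_mul_eq_mul_integral
      hu2.aestronglyMeasurable hv1.aestronglyMeasurable
  -- ∫ (1-λ) = 1 - ∫ λ
  have hone : ∫ ω, (1 - lam ω) = 1 - ∫ ω, lam ω := by
    simpa using integral_sub (integrable_const (1:ℝ)) il
  -- sum identity : ∫λ² + 2∫λ(1-λ) + ∫(1-λ)² = 1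
  have hsum : (∫ ω, (lam ω)^2) + (∫ ω, lam ω * (1 - lam ω))
      + (∫ ω, lam ω * (1 - lam ω)) + (∫ ω, (1 - lam ω)^2) = 1 := by
    have h0 : ∫ ω, ((lam ω)^2 + lam ω * (1 - lam ω) + lam ω * (1 - lam ω) + (1 - lam ω)^2)
        = ∫ (_ : Ω), (1:ℝ) := by
      apply integral_congr_ae
      filter_upwards with ω
      ring
    have k1 : Integrable (fun ω => (lam ω)^2 + lam ω * (1 - lam ω)) ℙ := il2.add ilm
    have k2 : Integrable (fun ω => (lam ω)^2 + lam ω * (1 - lam ω)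
        + lam ω * (1 - lam ω)) ℙ := k1.add ilm
    rw [integral_add k2 il2', integral_add k1 ilm, integral_add il2 ilm] at h0
    simpa using h0
  -- expansion of the product integral
  have hexp : (∫ ω, (lam ω * u1 ω + (1 - lam ω) * u2 ω) * (lam ω * v1 ω + (1 - lam ω) * v2 ω))
      = (∫ ω, (lam ω)^2 * (u1 ω * v1 ω)) + (∫ ω, (lam ω * (1 - lam ω)) * (u1 ω * v2 ω))
        + (∫ ω, (lam ω * (1 - lam ω)) * (u2 ω * v1 ω))
        + (∫ ω, ((1 - lam ω)^2) * (u2 ω * v2 ω)) := by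
    have j1 : Integrable (fun ω => (lam ω)^2 * (u1 ω * v1 ω)) ℙ :=
      i11.bdd_mul m1.aestronglyMeasurable (c := 1) (ae_of_all _ fun ω => (Real.norm_eq_abs _) ▸ hsq ω)
    have j2 : Integrable (fun ω => (lam ω * (1 - lam ω)) * (u1 ω * v2 ω)) ℙ :=
      i12.bdd_mul m3.aestronglyMeasurable (c := 1) (ae_of_all _ fun ω => (Real.norm_eq_abs _) ▸ hmm ω)
    have j3 : Integrable (fun ω => (lam ω * (1 - lam ω)) * (u2 ω * v1 ω)) ℙ :=
      i21.bdd_mul m3.aestronglyMeasurable (c := 1) (ae_of_all _ fun ω => (Real.norm_eq_abs _) ▸ hmm ω)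
    have j4 : Integrable (fun ω => ((1 - lam ω)^2) * (u2 ω * v2 ω)) ℙ :=
      i22.bdd_mul m2.aestronglyMeasurable (c := 1) (ae_of_all _ fun ω => (Real.norm_eq_abs _) ▸ hsq' ω)
    have j12 : Integrable (fun ω => lam ω ^ 2 * (u1 ω * v1 ω)
        + lam ω * (1 - lam ω) * (u1 ω * v2 ω)) ℙ := j1.add j2
    have j123 : Integrable (fun ω => lam ω ^ 2 * (u1 ω * v1 ω)
        + lam ω * (1 - lam ω) * (u1 ω * v2 ω)
        + lam ω * (1 - lam ω) * (u2 ω * v1 ω)) ℙ := j12.add j3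
    rw [← integral_add j1 j2, ← integral_add j12 j3, ← integral_add j123 j4]
    apply integral_congr_ae
    filter_upwards with ω
    ring
  -- expansion of the means
  have hmu : (∫ ω, lam ω * u1 ω + (1 - lam ω) * u2 ω)
      = (∫ ω, lam ω * u1 ω) + ∫ ω, (1 - lam ω) * u2 ω := by
    apply integral_add
    · exact iu1.bdd_mul hlam.aestronglyMeasurable (c := 1) (ae_of_all _ fun ω => (Real.norm_eq_abs _) ▸ habs ω)
    · exact iu2.bdd_mul (measurable_const.sub hlam).aestronglyMeasurable
        (c := 1) (ae_of_all _ fun ω => (Real.norm_eq_abs _) ▸ habs' ω)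
  have hmv : (∫ ω, lam ω * v1 ω + (1 - lam ω) * v2 ω)
      = (∫ ω, lam ω * v1 ω) + ∫ ω, (1 - lam ω) * v2 ω := by
    apply integral_add
    · exact iv1.bdd_mul hlam.aestronglyMeasurable (c := 1) (ae_of_all _ fun ω => (Real.norm_eq_abs _) ▸ habs ω)
    · exact iv2.bdd_mul (measurable_const.sub hlam).aestronglyMeasurable
        (c := 1) (ae_of_all _ fun ω => (Real.norm_eq_abs _) ▸ habs' ω)
  rw [hexp, hmu, hmv, e1, e2, e3, e4, f1, f2, g1, g2, c12, c21, du, dv, duv, hone]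
  linear_combination ((∫ ω, u1 ω) * ∫ ω, v1 ω) * hsum

lemma lam_scale_pos {Ω : Type*} [MeasureSpace Ω] [IsProbabilityMeasure (ℙ : Measure Ω)]
    (lam : Ω → ℝ) (hlam : Measurable lam) (hrange : ∀ ω, lam ω ∈ Set.Icc (0:ℝ) 1) :
    0 < (∫ ω, (lam ω)^2) + ∫ ω, (1 - lam ω)^2 := by
  have hb0 : ∀ ω, 0 ≤ lam ω := fun ω => (hrange ω).1
  have hb1 : ∀ ω, lam ω ≤ 1 := fun ω => (hrange ω).2
  have hsq : ∀ ω, |(lam ω)^2| ≤ 1 := fun ω => by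
    rw [abs_of_nonneg (sq_nonneg _)]; nlinarith [hb0 ω, hb1 ω]
  have hsq' : ∀ ω, |(1 - lam ω)^2| ≤ 1 := fun ω => by
    rw [abs_of_nonneg (sq_nonneg _)]; nlinarith [hb0 ω, hb1 ω]
  have il2 : Integrable (fun ω => (lam ω)^2) ℙ := bdd_int (hlam.pow_const 2) hsq
  have il2' : Integrable (fun ω => (1 - lam ω)^2) ℙ :=
    bdd_int ((measurable_const.sub hlam).pow_const 2) hsq'
  have h' : ∫ ω, ((lam ω)^2 + (1 - lam ω)^2) = (∫ ω, (lam ω)^2) + ∫ ω, (1 - lam ω)^2 :=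
    integral_add il2 il2'
  have hmono : (1/2 : ℝ) ≤ ∫ ω, ((lam ω)^2 + (1 - lam ω)^2) := by
    have : ∫ (_ : Ω), (1/2 : ℝ) ≤ ∫ ω, ((lam ω)^2 + (1 - lam ω)^2) := by
      apply integral_mono (integrable_const _) (il2.add il2')
      intro ω
      simp only [Pi.add_apply]
      nlinarith [sq_nonneg (lam ω - (1 - lam ω))]
    simpa using this
  linarith [h' ▸ hmono]


/-- Vanilla mixup leaves the population least-squares slope unchanged:
with `(x₁,y₁), (x₂,y₂)` i.i.d. copies of `(x,y)`, `λ ∈ [0,1]` independent of the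
pairs, `x̃ = λx₁ + (1−λ)x₂`, `ỹ = λy₁ + (1−λ)y₂`, one has
`Cov(x̃,ỹ) = (E[λ²]+E[(1−λ)²])·Cov(x,y)`, `Cov(x̃) = (E[λ²]+E[(1−λ)²])·Cov(x)`,
and hence `Cov(x̃)⁻¹Cov(x̃,ỹ) = Cov(x)⁻¹Cov(x,y)` when `Cov(x)` is invertible. -/
theorem stmt_1 {Ω : Type*} [MeasureSpace Ω] [IsProbabilityMeasure (ℙ : Measure Ω)]
    {p : ℕ} (x1 x2 : Ω → Fin p → ℝ) (y1 y2 : Ω → ℝ) (lam : Ω → ℝ)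
    (hx1 : Measurable x1) (hx2 : Measurable x2)
    (hy1 : Measurable y1) (hy2 : Measurable y2) (hlam : Measurable lam)
    (hy01 : ∀ ω, y1 ω = 0 ∨ y1 ω = 1)
    (hrange : ∀ ω, lam ω ∈ Set.Icc (0 : ℝ) 1)
    (hx2mom : ∀ i, MemLp (fun ω => x1 ω i) 2 ℙ) (hy2mom : MemLp y1 2 ℙ)
    -- `(x₁,y₁)` and `(x₂,y₂)` are i.i.d. copies of `(x,y)`
    (hiid : IdentDistrib (fun ω => (x1 ω, y1 ω)) (fun ω => (x2 ω, y2 ω)) ℙ ℙ)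
    (hpairindep : IndepFun (fun ω => (x1 ω, y1 ω)) (fun ω => (x2 ω, y2 ω)) ℙ)
    -- `λ` is independent of the pairs
    (hlamindep : IndepFun lam (fun ω => (x1 ω, y1 ω, x2 ω, y2 ω)) ℙ) :
    (∀ i,
      (∫ ω, (lam ω * x1 ω i + (1 - lam ω) * x2 ω i) *
            (lam ω * y1 ω + (1 - lam ω) * y2 ω))
        - (∫ ω, lam ω * x1 ω i + (1 - lam ω) * x2 ω i) *
            (∫ ω, lam ω * y1 ω + (1 - lam ω) * y2 ω)
      = ((∫ ω, (lam ω) ^ 2) + ∫ ω, (1 - lam ω) ^ 2) *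
          ((∫ ω, x1 ω i * y1 ω) - (∫ ω, x1 ω i) * ∫ ω, y1 ω)) ∧
    (∀ i j,
      (∫ ω, (lam ω * x1 ω i + (1 - lam ω) * x2 ω i) *
            (lam ω * x1 ω j + (1 - lam ω) * x2 ω j))
        - (∫ ω, lam ω * x1 ω i + (1 - lam ω) * x2 ω i) *
            (∫ ω, lam ω * x1 ω j + (1 - lam ω) * x2 ω j)
      = ((∫ ω, (lam ω) ^ 2) + ∫ ω, (1 - lam ω) ^ 2) *
          ((∫ ω, x1 ω i * x1 ω j) - (∫ ω, x1 ω i) * ∫ ω, x1 ω j)) ∧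
    (IsUnit (Matrix.of fun i j =>
        (∫ ω, x1 ω i * x1 ω j) - (∫ ω, x1 ω i) * ∫ ω, x1 ω j).det →
      (Matrix.of fun i j =>
          (∫ ω, (lam ω * x1 ω i + (1 - lam ω) * x2 ω i) *
                (lam ω * x1 ω j + (1 - lam ω) * x2 ω j))
            - (∫ ω, lam ω * x1 ω i + (1 - lam ω) * x2 ω i) *
                (∫ ω, lam ω * x1 ω j + (1 - lam ω) * x2 ω j))⁻¹
        *ᵥ (fun i =>
          (∫ ω, (lam ω * x1 ω i + (1 - lam ω) * x2 ω i) *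
                (lam ω * y1 ω + (1 - lam ω) * y2 ω))
            - (∫ ω, lam ω * x1 ω i + (1 - lam ω) * x2 ω i) *
                (∫ ω, lam ω * y1 ω + (1 - lam ω) * y2 ω))
      = (Matrix.of fun i j =>
          (∫ ω, x1 ω i * x1 ω j) - (∫ ω, x1 ω i) * ∫ ω, x1 ω j)⁻¹
        *ᵥ (fun i => (∫ ω, x1 ω i * y1 ω) - (∫ ω, x1 ω i) * ∫ ω, y1 ω)) := by
  have part1 : ∀ i,
      (∫ ω, (lam ω * x1 ω i + (1 - lam ω) * x2 ω i) *
            (lam ω * y1 ω + (1 - lam ω) * y2 ω))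
        - (∫ ω, lam ω * x1 ω i + (1 - lam ω) * x2 ω i) *
            (∫ ω, lam ω * y1 ω + (1 - lam ω) * y2 ω)
      = ((∫ ω, (lam ω) ^ 2) + ∫ ω, (1 - lam ω) ^ 2) *
          ((∫ ω, x1 ω i * y1 ω) - (∫ ω, x1 ω i) * ∫ ω, y1 ω) := by
    intro i
    exact mix_cov (fun ω => x1 ω i) y1 (fun ω => x2 ω i) y2 lam
      (hx1.eval) hy1 (hx2.eval) hy2 hlam hrange (hx2mom i) hy2mom
      (hiid.comp (u := fun q : (Fin p → ℝ) × ℝ => (q.1 i, q.2)) (by fun_prop))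
      (hpairindep.comp (φ := fun q : (Fin p → ℝ) × ℝ => (q.1 i, q.2))
        (ψ := fun q : (Fin p → ℝ) × ℝ => (q.1 i, q.2)) (by fun_prop) (by fun_prop))
      (hlamindep.comp measurable_id
        (ψ := fun q : (Fin p → ℝ) × ℝ × (Fin p → ℝ) × ℝ =>
          (q.1 i, q.2.1, q.2.2.1 i, q.2.2.2)) (by fun_prop))
  have part2 : ∀ i j,
      (∫ ω, (lam ω * x1 ω i + (1 - lam ω) * x2 ω i) *
            (lam ω * x1 ω j + (1 - lam ω) * x2 ω j))
        - (∫ ω, lam ω * x1 ω i + (1 - lam ω) * x2 ω i) *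
            (∫ ω, lam ω * x1 ω j + (1 - lam ω) * x2 ω j)
      = ((∫ ω, (lam ω) ^ 2) + ∫ ω, (1 - lam ω) ^ 2) *
          ((∫ ω, x1 ω i * x1 ω j) - (∫ ω, x1 ω i) * ∫ ω, x1 ω j) := by
    intro i j
    exact mix_cov (fun ω => x1 ω i) (fun ω => x1 ω j) (fun ω => x2 ω i) (fun ω => x2 ω j) lam
      (hx1.eval) (hx1.eval) (hx2.eval) (hx2.eval) hlam hrange (hx2mom i) (hx2mom j)
      (hiid.comp (u := fun q : (Fin p → ℝ) × ℝ => (q.1 i, q.1 j)) (by fun_prop))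
      (hpairindep.comp (φ := fun q : (Fin p → ℝ) × ℝ => (q.1 i, q.1 j))
        (ψ := fun q : (Fin p → ℝ) × ℝ => (q.1 i, q.1 j)) (by fun_prop) (by fun_prop))
      (hlamindep.comp measurable_id
        (ψ := fun q : (Fin p → ℝ) × ℝ × (Fin p → ℝ) × ℝ =>
          (q.1 i, q.1 j, q.2.2.1 i, q.2.2.1 j)) (by fun_prop))
  refine ⟨part1, part2, ?_⟩
  intro hdet
  set s : ℝ := (∫ ω, (lam ω) ^ 2) + ∫ ω, (1 - lam ω) ^ 2 with hs_def
  have hs : 0 < s := lam_scale_pos lam hlam hrange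
  set M : Matrix (Fin p) (Fin p) ℝ :=
    Matrix.of fun i j => (∫ ω, x1 ω i * x1 ω j) - (∫ ω, x1 ω i) * ∫ ω, x1 ω j with hM_def
  set v : Fin p → ℝ := fun i => (∫ ω, x1 ω i * y1 ω) - (∫ ω, x1 ω i) * ∫ ω, y1 ω with hv_def
  have hMt : (Matrix.of fun i j =>
      (∫ ω, (lam ω * x1 ω i + (1 - lam ω) * x2 ω i) *
            (lam ω * x1 ω j + (1 - lam ω) * x2 ω j))
        - (∫ ω, lam ω * x1 ω i + (1 - lam ω) * x2 ω i) *
            (∫ ω, lam ω * x1 ω j + (1 - lam ω) * x2 ω j)) = s • M := by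
    ext i j
    simpa [hM_def] using part2 i j
  have hvt : (fun i =>
      (∫ ω, (lam ω * x1 ω i + (1 - lam ω) * x2 ω i) *
            (lam ω * y1 ω + (1 - lam ω) * y2 ω))
        - (∫ ω, lam ω * x1 ω i + (1 - lam ω) * x2 ω i) *
            (∫ ω, lam ω * y1 ω + (1 - lam ω) * y2 ω)) = s • v := by
    funext i
    simpa using part1 i
  rw [hMt, hvt]
  have hinv : (s • M)⁻¹ = s⁻¹ • M⁻¹ := by
    apply Matrix.inv_eq_left_inv
    rw [Matrix.smul_mul, Matrix.mul_smul, smul_smul, inv_mul_cancel₀ (ne_of_gt hs),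
      one_smul, Matrix.nonsing_inv_mul M hdet]
  rw [hinv, smul_mulVec, mulVec_smul, smul_smul, inv_mul_cancel₀ (ne_of_gt hs),
    one_smul]
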